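/- Let P = Σ_{a ∈ S} μ_a Δ_{I(a)} ⊆ ℝ^{n+1} with μ_a > 0 and I(a) nonempty, and let r(I) = Σ_{a : I(a) ∩ I ≠ ∅} μ_a. Then P = {x ∈ ℝ^{n+1} : x_i ≥ 0 for all i, Σ_{i ∈ {0,…,n}} x_i = r({0,…,n}), and Σ_{i ∈ I} x_i ≤ r(I) for all I ⊆ {0,…,n}}. -/

import Mathlib

/-!
Both sides are convex. The Minkowski sum of the dilated simplices is the convex hull of the points
`∑ a, μ a • e (p a)` with `p a ∈ I a`, and each such point satisfies the constraints of the base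
polytope, giving one inclusion. For the other, a closed convex set is the intersection of its
supporting half-spaces, and the support function of the sum in direction `c` is
`∑ a, μ a * max_{I a} c`; so it suffices that `c ⬝ᵥ x ≤ ∑ a, μ a * max_{I a} c` on the base
polytope. This goes by induction on the number of values of `c`: raising the smallest value `m`
of `c` to the next one `t` adds `(t - m) * ∑_{c i = m} x i` to the left side and
`(t - m) * ∑_{I a ⊆ {c = m}} μ a` to the right side, and the latter is the smaller one by the
rank inequality for the complement of `{c = m}`.
-/

open Finset Matrix Pointwise

section

variable {ι α : Type*}

section BasePolytope

variable [Fintype ι]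

def basePolytope (r : Finset ι → ℝ) : Set (ι → ℝ) :=
  {x | (∀ i, 0 ≤ x i) ∧ ∑ i, x i = r univ ∧ ∀ J, ∑ i ∈ J, x i ≤ r J}

theorem convex_basePolytope (r : Finset ι → ℝ) : Convex ℝ (basePolytope r) := by
  rintro x ⟨hx0, hxt, hxJ⟩ y ⟨hy0, hyt, hyJ⟩ s t hs ht hst
  have hsum : ∀ J : Finset ι, ∑ i ∈ J, (s • x + t • y) i = s * ∑ i ∈ J, x i + t * ∑ i ∈ J, y i :=
    fun J => by simp only [Pi.add_apply, Pi.smul_apply, smul_eq_mul, sum_add_distrib, mul_sum]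
  refine ⟨fun i => ?_, ?_, fun J => ?_⟩
  · simp only [Pi.add_apply, Pi.smul_apply, smul_eq_mul]
    have := hx0 i; have := hy0 i; positivity
  · rw [hsum, hxt, hyt, ← add_mul, hst, one_mul]
  · rw [hsum]
    calc s * ∑ i ∈ J, x i + t * ∑ i ∈ J, y i ≤ s * r J + t * r J := by
          gcongr
          exacts [hxJ J, hyJ J]
      _ = r J := by rw [← add_mul, hst, one_mul]

end BasePolytope

variable [Fintype α] [DecidableEq ι]

def choiceVertices (μ : α → ℝ) (I : α → Finset ι) : Set (ι → ℝ) :=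
  (fun p : α → ι => ∑ a, μ a • Pi.single (p a) (1 : ℝ)) '' {p | ∀ a, p a ∈ I a}

theorem sum_smul_convexHull_eq_convexHull_choiceVertices (μ : α → ℝ) (I : α → Finset ι) :
    ∑ a, μ a • convexHull ℝ ((fun i => Pi.single i (1 : ℝ)) '' (I a : Set ι)) =
      convexHull ℝ (choiceVertices μ I) := by
  simp_rw [← convexHull_smul, ← convexHull_sum]
  congr 1
  ext v
  simp only [Set.mem_fintype_sum, ← Set.image_smul, Set.image_image, choiceVertices,
    Set.mem_image]
  constructor
  · rintro ⟨g, hg, rfl⟩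
    choose p hp hpg using hg
    exact ⟨p, hp, sum_congr rfl fun a _ => hpg a⟩
  · rintro ⟨p, hp, rfl⟩
    exact ⟨_, fun a => ⟨p a, hp a, rfl⟩, rfl⟩

theorem sum_apply_sum_smul_single (μ : α → ℝ) (p : α → ι) (J : Finset ι) :
    ∑ i ∈ J, (∑ a, μ a • Pi.single (p a) (1 : ℝ)) i = ∑ a ∈ univ.filter fun a => p a ∈ J, μ a := by
  simp only [Finset.sum_apply, Pi.smul_apply, Pi.single_apply, smul_eq_mul, mul_ite, mul_one,
    mul_zero, sum_filter]
  rw [sum_comm]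
  simp [sum_ite_eq']

def coverRank (μ : α → ℝ) (I : α → Finset ι) (J : Finset ι) : ℝ :=
  ∑ a ∈ univ.filter fun a => (I a ∩ J).Nonempty, μ a

variable [Fintype ι] {μ : α → ℝ} {I : α → Finset ι}

theorem finite_choiceVertices : (choiceVertices μ I).Finite :=
  (Set.toFinite _).image _

theorem coverRank_univ (hI : ∀ a, (I a).Nonempty) : coverRank μ I univ = ∑ a, μ a := by
  simp [coverRank, hI]

theorem coverRank_compl_add_sum_filter_subset (J : Finset ι) :
    coverRank μ I Jᶜ + ∑ a ∈ univ.filter fun a => I a ⊆ J, μ a = ∑ a, μ a := by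
  rw [coverRank, ← sum_filter_add_sum_filter_not univ fun a => (I a ∩ Jᶜ).Nonempty]
  congr 2
  ext a
  simp [Finset.Nonempty, subset_iff]

theorem convexHull_choiceVertices_subset_basePolytope (hμ : ∀ a, 0 ≤ μ a) :
    convexHull ℝ (choiceVertices μ I) ⊆ basePolytope (coverRank μ I) := by
  refine convexHull_min ?_ (convex_basePolytope _)
  rintro _ ⟨p, hp, rfl⟩
  have hpJ (J : Finset ι) :
      univ.filter (fun a => p a ∈ J) ⊆ univ.filter fun a => (I a ∩ J).Nonempty :=
    monotone_filter_right _ fun a _ hpa => ⟨p a, mem_inter.2 ⟨hp a, hpa⟩⟩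
  refine ⟨fun i => ?_, ?_, fun J => ?_⟩ <;> dsimp only
  · rw [Finset.sum_apply]
    exact sum_nonneg fun a _ => by
      rw [Pi.smul_apply, Pi.single_apply]
      split_ifs <;> simp [hμ a]
  · rw [coverRank_univ fun a => ⟨p a, hp a⟩, sum_apply_sum_smul_single, filter_true_of_mem]
    exact fun a _ => mem_univ _
  · rw [sum_apply_sum_smul_single]
    exact sum_le_sum_of_subset_of_nonneg (hpJ J) fun a _ _ => hμ a

variable {x : ι → ℝ}

theorem sum_filter_subset_le_sum (hsum : ∀ J, ∑ i ∈ J, x i ≤ coverRank μ I J)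
    (htot : ∑ i, x i = ∑ a, μ a) (J : Finset ι) :
    ∑ a ∈ univ.filter (fun a => I a ⊆ J), μ a ≤ ∑ i ∈ J, x i := by
  have := hsum Jᶜ
  have := sum_add_sum_compl J x
  linarith [coverRank_compl_add_sum_filter_subset (μ := μ) (I := I) J]

theorem max_eq_add_ite {s t m : ℝ} (h : s < t → s = m) :
    max s t = s + if s < t then t - m else 0 := by
  split_ifs with hst
  · rw [max_eq_right hst.le, h hst]; ring
  · rw [max_eq_left (not_lt.1 hst), add_zero]

theorem dotProduct_le_of_max_le (hsum : ∀ J, ∑ i ∈ J, x i ≤ coverRank μ I J)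
    (htot : ∑ i, x i = ∑ a, μ a) (hI : ∀ a, (I a).Nonempty) {c : ι → ℝ} {m t : ℝ} (hmt : m ≤ t)
    (hgap : ∀ i, c i < t → c i = m)
    (h : (fun i => max (c i) t) ⬝ᵥ x ≤ ∑ a, μ a * (I a).sup' (hI a) fun i => max (c i) t) :
    c ⬝ᵥ x ≤ ∑ a, μ a * (I a).sup' (hI a) c := by
  set J := univ.filter fun i => c i < t
  have hlhs : (fun i => max (c i) t) ⬝ᵥ x = c ⬝ᵥ x + (t - m) * ∑ i ∈ J, x i := by
    simp only [dotProduct, J, sum_filter, mul_sum, ← sum_add_distrib]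
    refine sum_congr rfl fun i _ => ?_
    rw [max_eq_add_ite (hgap i)]
    split_ifs <;> ring
  have hrhs : ∑ a, μ a * (I a).sup' (hI a) (fun i => max (c i) t) =
      ∑ a, μ a * (I a).sup' (hI a) c + (t - m) * ∑ a ∈ univ.filter (fun a => I a ⊆ J), μ a := by
    simp only [sum_filter, mul_sum, ← sum_add_distrib]
    refine sum_congr rfl fun a _ => ?_
    obtain ⟨i, hi, hci⟩ := exists_mem_eq_sup' (hI a) c
    have hsub : I a ⊆ J ↔ (I a).sup' (hI a) c < t := by simp [J, subset_iff, sup'_lt_iff]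
    have hsup : (I a).sup' (hI a) (fun i => max (c i) t) = max ((I a).sup' (hI a) c) t :=
      (apply_sup'_eq_sup'_comp (hI a) (max · t) fun y z => sup_sup_distrib_right y z t).symm
    rw [hsup, max_eq_add_ite (m := m) fun h => hci ▸ hgap i (hci ▸ h)]
    by_cases hlt : (I a).sup' (hI a) c < t
    · rw [if_pos hlt, if_pos (hsub.2 hlt)]; ring
    · rw [if_neg hlt, if_neg (mt hsub.1 hlt)]; ring
  have := mul_le_mul_of_nonneg_left (sum_filter_subset_le_sum hsum htot J) (sub_nonneg.2 hmt)
  linarith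

theorem dotProduct_le_sum_mul_sup' (hsum : ∀ J, ∑ i ∈ J, x i ≤ coverRank μ I J)
    (htot : ∑ i, x i = ∑ a, μ a) (hI : ∀ a, (I a).Nonempty) (c : ι → ℝ) :
    c ⬝ᵥ x ≤ ∑ a, μ a * (I a).sup' (hI a) c := by
  rcases isEmpty_or_nonempty ι with hι | hι
  · have : IsEmpty α := ⟨fun a => (hI a).elim fun i _ => isEmptyElim i⟩
    simp [dotProduct]
  obtain ⟨k, hk⟩ : ∃ k, (univ.image c).card = k := ⟨_, rfl⟩
  induction k using Nat.strong_induction_on generalizing c with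
  | _ k ih =>
  set V := univ.image c
  have hV : V.Nonempty := univ_nonempty.image c
  have hcV (i : ι) : c i ∈ V := mem_image_of_mem c (mem_univ i)
  set m := V.min' hV
  by_cases hconst : ∀ i, c i = m
  · have hsup (a : α) : (I a).sup' (hI a) c = m := by
      obtain ⟨i, -, hi⟩ := exists_mem_eq_sup' (hI a) c
      rw [hi, hconst]
    refine le_of_eq ?_
    calc c ⬝ᵥ x = m * ∑ i, x i := by simp only [dotProduct, hconst, mul_sum]
      _ = ∑ a, μ a * (I a).sup' (hI a) c := by simp only [htot, hsup, mul_sum, mul_comm]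
  obtain ⟨i₀, hi₀⟩ := not_forall.1 hconst
  have hW : (V.erase m).Nonempty := ⟨c i₀, mem_erase.2 ⟨hi₀, hcV i₀⟩⟩
  set t := (V.erase m).min' hW
  have htW : t ∈ V.erase m := min'_mem _ hW
  have hmt : m < t := lt_of_le_of_ne (min'_le V t (mem_of_mem_erase htW)) (ne_of_mem_erase htW).symm
  have hgap (i : ι) (hi : c i < t) : c i = m := by
    by_contra hne
    exact hi.not_ge (min'_le _ _ (mem_erase.2 ⟨hne, hcV i⟩))
  refine dotProduct_le_of_max_le hsum htot hI hmt.le hgap (ih _ ?_ _ rfl)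
  calc (univ.image fun i => max (c i) t).card ≤ (V.erase m).card := by
        refine card_le_card fun v hv => ?_
        obtain ⟨i, -, rfl⟩ := mem_image.1 hv
        rcases lt_or_ge (c i) t with hi | hi
        · rwa [max_eq_right hi.le]
        · rw [max_eq_left hi]
          exact mem_erase.2 ⟨(hmt.trans_le hi).ne', hcV i⟩
    _ < k := hk ▸ card_erase_lt_of_mem (min'_mem V hV)

theorem dotProduct_sum_smul_single (c : ι → ℝ) (μ : α → ℝ) (p : α → ι) :
    c ⬝ᵥ ∑ a, μ a • Pi.single (p a) (1 : ℝ) = ∑ a, μ a * c (p a) := by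
  simp [dotProduct_sum, dotProduct_smul, dotProduct_single]

theorem StrongDual.apply_eq_dotProduct (l : StrongDual ℝ (ι → ℝ)) (y : ι → ℝ) :
    l y = (fun i => l (Pi.single i 1)) ⬝ᵥ y := by
  conv_lhs => rw [← Finset.univ_sum_single y]
  simp only [map_sum, dotProduct]
  refine sum_congr rfl fun i _ => ?_
  rw [mul_comm, ← smul_eq_mul, ← map_smul, ← Pi.single_smul', smul_eq_mul, mul_one]

theorem basePolytope_subset_convexHull_choiceVertices (hI : ∀ a, (I a).Nonempty) :
    basePolytope (coverRank μ I) ⊆ convexHull ℝ (choiceVertices μ I) := by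
  rintro x ⟨-, htot, hsum⟩
  rw [coverRank_univ hI] at htot
  refine (iInter_halfSpaces_eq (convex_convexHull ℝ _)
    (finite_choiceVertices.isClosed_convexHull ℝ)).subset (Set.mem_iInter.2 fun l => ?_)
  set c := fun i => l (Pi.single i 1)
  choose p hp hpc using fun a => exists_mem_eq_sup' (hI a) c
  refine ⟨_, subset_convexHull ℝ _ ⟨p, hp, rfl⟩, ?_⟩
  rw [StrongDual.apply_eq_dotProduct, StrongDual.apply_eq_dotProduct, dotProduct_sum_smul_single]
  simpa [hpc] using dotProduct_le_sum_mul_sup' hsum htot hI c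

end

/-- The Minkowski sum of dilated simplices `P = Σ_a μ_a Δ_{I(a)}` equals the polymatroid
base polytope of the rank function `r(I) = Σ_{a : I(a) ∩ I ≠ ∅} μ_a`. -/
theorem minkowski_sum_eq_base_polytope (n : ℕ) {α : Type*} [Fintype α]
    (μ : α → ℝ) (hμ : ∀ a, 0 < μ a)
    (I : α → Finset (Fin (n + 1))) (hI : ∀ a, (I a).Nonempty)
    (r : Finset (Fin (n + 1)) → ℝ)
    (hr : ∀ J, r J = ∑ a ∈ Finset.univ.filter (fun a => (I a ∩ J).Nonempty), μ a) :
    (∑ a : α, μ a • convexHull ℝ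
        ((fun i => Pi.single i (1 : ℝ)) '' ((I a : Set (Fin (n + 1)))))) =
      {x : Fin (n + 1) → ℝ | (∀ i, 0 ≤ x i) ∧ (∑ i, x i) = r Finset.univ ∧
        ∀ J : Finset (Fin (n + 1)), ∑ i ∈ J, x i ≤ r J} := by
  obtain rfl : r = coverRank μ I := funext hr
  rw [sum_smul_convexHull_eq_convexHull_choiceVertices]
  exact (convexHull_choiceVertices_subset_basePolytope fun a => (hμ a).le).antisymm
    (basePolytope_subset_convexHull_choiceVertices hI)
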